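/- If X_n ⊆ κ^ω for n < ω and for each n and each σ ∈ κ^n the section X_n↾σ = {s ∈ κ^ω : σ⌢s ∈ X_n} is U-small, then the union ⋃_{n<ω} X_n is U-small. -/
import Mathlib


universe u

namespace UMeas

variable {A : Type u}

/-- The first `n` values of an infinite sequence, as a list. -/
def seg (s : ℕ → A) (n : ℕ) : List A := List.ofFn (fun i : Fin n => s i)

/-- `T` is a `U`-branching tree: a set of finite sequences closed under initial
segments, containing the empty sequence, whose branching sets are in `U`. -/
def IsUTree (U : Ultrafilter A) (T : Set (List A)) : Prop :=
  ([] ∈ T) ∧ (∀ σ ∈ T, ∀ τ : List A, τ <+: σ → τ ∈ T) ∧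
    ∀ σ ∈ T, {a : A | σ ++ [a] ∈ T} ∈ U

/-- The set of infinite branches through `T`. -/
def branches (T : Set (List A)) : Set (ℕ → A) := {s | ∀ n, seg s n ∈ T}

/-- Concatenation `σ⌢s` of a finite sequence with an infinite sequence. -/
def app (σ : List A) (s : ℕ → A) : ℕ → A :=
  fun n => if h : n < σ.length then σ.get ⟨n, h⟩ else s (n - σ.length)

/-- The section `X↾σ = {s | σ⌢s ∈ X}`. -/
def sect (X : Set (ℕ → A)) (σ : List A) : Set (ℕ → A) := {s | app σ s ∈ X}

def ULarge (U : Ultrafilter A) (X : Set (ℕ → A)) : Prop :=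
  ∃ T, IsUTree U T ∧ branches T ⊆ X

def USmall (U : Ultrafilter A) (X : Set (ℕ → A)) : Prop :=
  ∃ T, IsUTree U T ∧ branches T ∩ X = ∅

def UDetermined (U : Ultrafilter A) (X : Set (ℕ → A)) : Prop :=
  ULarge U X ∨ USmall U X

def UNull (U : Ultrafilter A) (X : Set (ℕ → A)) : Prop :=
  ∀ σ : List A, USmall U (sect X σ)

def UMeasurable (U : Ultrafilter A) (X : Set (ℕ → A)) : Prop :=
  ∀ σ : List A, UDetermined U (sect X σ)

end UMeas

namespace UMeas

variable {A : Type u}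

private lemma seg_length (s : ℕ → A) (n : ℕ) : (seg s n).length = n := by
  simp [seg]

private lemma seg_take (s : ℕ → A) {n m : ℕ} (hnm : n ≤ m) :
    (seg s m).take n = seg s n := by
  apply List.ext_getElem
  · simp [seg, hnm]
  · intro i h1 h2
    simp [seg, List.getElem_ofFn]

private lemma seg_drop (s : ℕ → A) (n m : ℕ) :
    (seg s (n + m)).drop n = seg (fun k => s (n + k)) m := by
  apply List.ext_getElem
  · simp [seg]
  · intro i h1 h2
    simp [seg, List.getElem_ofFn]

private lemma app_seg (s : ℕ → A) (n : ℕ) :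
    app (seg s n) (fun k => s (n + k)) = s := by
  funext m
  by_cases hm : m < n
  · simp [app, seg_length, hm, seg, List.get_ofFn]
  · have hm' : n ≤ m := le_of_not_gt hm
    simp only [app, seg_length, dif_neg hm]
    show s (n + (m - n)) = s m
    congr 1
    omega

theorem union_small (U : Ultrafilter A) (X : ℕ → Set (ℕ → A))
    (h : ∀ n : ℕ, ∀ σ : List A, σ.length = n → USmall U (sect (X n) σ)) :
    USmall U (⋃ n, X n) := by
  classical
  -- choose a witnessing tree for each σ
  have hc : ∀ σ : List A, ∃ T, IsUTree U T ∧ branches T ∩ sect (X σ.length) σ = ∅ :=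
    fun σ => h σ.length σ rfl
  choose F hF1 hF2 using hc
  refine ⟨{σ | ∀ n ≤ σ.length, σ.drop n ∈ F (σ.take n)}, ⟨?_, ?_, ?_⟩, ?_⟩
  · -- root
    intro n hn
    simp only [List.length_nil, Nat.le_zero] at hn
    subst hn
    simpa using (hF1 []).1
  · -- closed under prefixes
    rintro σ hσ τ ⟨r, rfl⟩
    intro n hn
    have h1 : (τ ++ r).take n = τ.take n := List.take_append_of_le_length hn
    have h2 : (τ ++ r).drop n = τ.drop n ++ r := List.drop_append_of_le_length hn
    have := hσ n (by simp; omega)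
    rw [h1, h2] at this
    exact (hF1 (τ.take n)).2.1 _ this _ ⟨r, rfl⟩
  · -- branching
    intro σ hσ
    have key : ⋂ n ∈ Finset.range (σ.length + 1),
        {a : A | σ.drop n ++ [a] ∈ F (σ.take n)} ∈ U := by
      rw [← Ultrafilter.mem_coe, Filter.biInter_finset_mem]
      intro n hn
      rw [Finset.mem_range] at hn
      exact (hF1 (σ.take n)).2.2 _ (hσ n (by omega))
    refine U.sets_of_superset key ?_
    intro a ha
    simp only [Set.mem_iInter, Finset.mem_range, Set.mem_setOf_eq] at ha
    intro n hn
    simp only [List.length_append, List.length_singleton] at hn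
    rcases Nat.lt_or_ge n (σ.length + 1) with h' | h'
    · have h1 : (σ ++ [a]).take n = σ.take n := by
        rcases Nat.lt_or_ge n σ.length with h'' | h''
        · exact List.take_append_of_le_length (le_of_lt h'')
        · have : n = σ.length := by omega
          subst this
          simp
      have h2 : (σ ++ [a]).drop n = σ.drop n ++ [a] :=
        List.drop_append_of_le_length (by omega)
      rw [h1, h2]
      exact ha n h'
    · have : n = σ.length + 1 := by omega
      subst this
      have hlen : (σ ++ [a]).length = σ.length + 1 := by simp
      rw [← hlen, List.take_length, List.drop_length]
      exact (hF1 (σ ++ [a])).1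
  · -- branches avoid the union
    ext s
    simp only [Set.mem_inter_iff, Set.mem_iUnion, Set.mem_empty_iff_false, iff_false,
      not_and, not_exists]
    rintro hs n hsX
    have hb : (fun k => s (n + k)) ∈ branches (F (seg s n)) := by
      intro m
      have := hs (n + m) n (by simp [seg_length])
      rwa [seg_take s (Nat.le_add_right n m), seg_drop] at this
    have hsect : (fun k => s (n + k)) ∈ sect (X (seg s n).length) (seg s n) := by
      simp only [sect, Set.mem_setOf_eq, app_seg, seg_length]
      exact hsX
    have := hF2 (seg s n)
    rw [Set.eq_empty_iff_forall_notMem] at this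
    exact this _ ⟨hb, hsect⟩

end UMeas

theorem stmt1 {A : Type u} (U : Ultrafilter A) (X : ℕ → Set (ℕ → A))
    (h : ∀ n : ℕ, ∀ σ : List A, σ.length = n → UMeas.USmall U (UMeas.sect (X n) σ)) :
    UMeas.USmall U (⋃ n, X n) := UMeas.union_small U X h
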